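/- arXiv:1809.02707 — 4 statements merged into one kernel-verified Lean document; each statement's English description precedes it below -/
import Mathlib

section
/- Let (Ω, F, P) be a probability space with a filtration F_0 ⊆ F_1 ⊆ ... ⊆ F_n, and let X_1, ..., X_n be random variables such that each X_t takes values in {0,1}, is measurable with respect to F_t, and satisfies E[X_t | F_{t-1}] ≥ μ almost surely, where μ ∈ [0,1]. Let Y = X_1 + ... + X_n. Then for every δ ∈ (0,1), P(Y ≤ (1-δ) n μ) ≤ exp(-δ² n μ / 2). -/
open MeasureTheory ProbabilityTheory Finset Real

/-! Exponential moment method. A `{0,1}`-valued `x` satisfies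
`exp (λ x) = 1 + (exp λ - 1) x`, so for `λ ≤ 0` the lower bound on the conditional mean gives,
conditionally on the past, `E[exp (λ X_t)] ≤ 1 + (exp λ - 1) μ ≤ exp ((exp λ - 1) μ)`.
Peeling off one factor at a time, the moment generating function of `Y` at `λ` is at most
`exp ((exp λ - 1) μ n)`. Markov's inequality at `λ = -δ` and `exp (-δ) ≤ 1 - δ + δ² / 2`
give the bound. -/

lemma exp_mul_of_eq_zero_or_eq_one {x : ℝ} (lam : ℝ) (hx : x = 0 ∨ x = 1) :
    exp (lam * x) = 1 + (exp lam - 1) * x := by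
  rcases hx with rfl | rfl <;> simp

lemma exp_neg_le_one_sub_add_sq_div_two {x : ℝ} (hx : 0 ≤ x) :
    exp (-x) ≤ 1 - x + x ^ 2 / 2 := by
  have hprod : exp (-x) * exp x = 1 := by rw [← exp_add, neg_add_cancel, exp_zero]
  nlinarith [quadratic_le_exp_of_nonneg hx, exp_pos (-x), sq_nonneg x]

section OneStep

variable {Ω : Type*} {m m0 : MeasurableSpace Ω} {P : Measure Ω} [IsFiniteMeasure P]
  {Z X : Ω → ℝ} {μ C : ℝ}

lemma integrable_of_nonneg_of_le {f : Ω → ℝ} (hf : Measurable f) (hf0 : ∀ ω, 0 ≤ f ω)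
    (hfC : ∀ ω, f ω ≤ C) : Integrable f P :=
  .of_bound hf.aestronglyMeasurable C
    (.of_forall fun ω => by rw [norm_of_nonneg (hf0 ω)]; exact hfC ω)

lemma mul_integral_le_integral_mul_of_le_condExp (hm : m ≤ m0) (hZm : StronglyMeasurable[m] Z)
    (hZ0 : ∀ ω, 0 ≤ Z ω) (hZC : ∀ ω, Z ω ≤ C) (hX : Integrable X P)
    (hcond : ∀ᵐ ω ∂P, μ ≤ P[X | m] ω) :
    μ * ∫ ω, Z ω ∂P ≤ ∫ ω, Z ω * X ω ∂P := by
  have hZ_bound : ∀ᵐ ω ∂P, ‖Z ω‖ ≤ C :=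
    .of_forall fun ω => by rw [norm_of_nonneg (hZ0 ω)]; exact hZC ω
  have hZ_ae : AEStronglyMeasurable Z P := (hZm.mono hm).aestronglyMeasurable
  have hZX : Integrable (Z * X) P := hX.bdd_mul hZ_ae hZ_bound
  calc μ * ∫ ω, Z ω ∂P = ∫ ω, μ * Z ω ∂P := (integral_const_mul μ _).symm
    _ ≤ ∫ ω, Z ω * P[X | m] ω ∂P := by
        refine integral_mono_ae ((Integrable.of_bound hZ_ae C hZ_bound).const_mul μ)
          (integrable_condExp.bdd_mul hZ_ae hZ_bound) ?_
        filter_upwards [hcond] with ω hω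
        rw [mul_comm]
        exact mul_le_mul_of_nonneg_left hω (hZ0 ω)
    _ = ∫ ω, P[Z * X | m] ω ∂P :=
        integral_congr_ae (condExp_mul_of_stronglyMeasurable_left hZm hZX hX).symm
    _ = ∫ ω, Z ω * X ω ∂P := integral_condExp hm

lemma integral_mul_exp_mul_le (hm : m ≤ m0) {lam : ℝ} (hlam : lam ≤ 0)
    (hZm : StronglyMeasurable[m] Z) (hZ0 : ∀ ω, 0 ≤ Z ω) (hZC : ∀ ω, Z ω ≤ C)
    (hXm : Measurable X) (hX : ∀ ω, X ω = 0 ∨ X ω = 1)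
    (hcond : ∀ᵐ ω ∂P, μ ≤ P[X | m] ω) :
    ∫ ω, Z ω * exp (lam * X ω) ∂P ≤ exp ((exp lam - 1) * μ) * ∫ ω, Z ω ∂P := by
  have hX01 : ∀ ω, 0 ≤ X ω ∧ X ω ≤ 1 := fun ω => by rcases hX ω with h | h <;> simp [h]
  have hX_int : Integrable X P :=
    integrable_of_nonneg_of_le hXm (fun ω => (hX01 ω).1) (fun ω => (hX01 ω).2)
  have hZ_int : Integrable Z P := integrable_of_nonneg_of_le (hZm.mono hm).measurable hZ0 hZC
  have hZX_int : Integrable (fun ω => Z ω * X ω) P :=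
    hX_int.bdd_mul (hZm.mono hm).aestronglyMeasurable
      (.of_forall fun ω => by rw [norm_of_nonneg (hZ0 ω)]; exact hZC ω)
  have hmean := mul_integral_le_integral_mul_of_le_condExp hm hZm hZ0 hZC hX_int hcond
  have hcoeff : exp lam - 1 ≤ 0 := by linarith [exp_le_one_iff.mpr hlam]
  calc ∫ ω, Z ω * exp (lam * X ω) ∂P
        = ∫ ω, Z ω + (exp lam - 1) * (Z ω * X ω) ∂P := by
          congr 1 with ω
          rw [exp_mul_of_eq_zero_or_eq_one lam (hX ω)]
          ring
    _ = ∫ ω, Z ω ∂P + (exp lam - 1) * ∫ ω, Z ω * X ω ∂P := by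
          rw [integral_add hZ_int (hZX_int.const_mul _), integral_const_mul]
    _ ≤ (1 + (exp lam - 1) * μ) * ∫ ω, Z ω ∂P := by
          nlinarith [mul_le_mul_of_nonpos_left hmean hcoeff]
    _ ≤ exp ((exp lam - 1) * μ) * ∫ ω, Z ω ∂P := by
          gcongr
          · exact integral_nonneg hZ0
          · linarith [add_one_le_exp ((exp lam - 1) * μ)]

end OneStep

section Sums

variable {Ω : Type*} {m0 : MeasurableSpace Ω} {P : Measure Ω} (ℱ : Filtration ℕ m0) {n : ℕ}
  {X : ℕ → Ω → ℝ}

lemma measurable_sum_Icc_one (hmeas : ∀ t, 1 ≤ t → t ≤ n → Measurable[ℱ t] (X t)) :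
    Measurable[ℱ n] fun ω => ∑ t ∈ Icc 1 n, X t ω :=
  Finset.measurable_sum _ fun t ht =>
    have ht := Finset.mem_Icc.mp ht
    (hmeas t ht.1 ht.2).mono (ℱ.mono ht.2) le_rfl

lemma exp_mul_sum_Icc_one_le_one {lam : ℝ} (hlam : lam ≤ 0)
    (hval : ∀ t, 1 ≤ t → t ≤ n → ∀ ω, X t ω = 0 ∨ X t ω = 1) (ω : Ω) :
    exp (lam * ∑ t ∈ Icc 1 n, X t ω) ≤ 1 := by
  refine exp_le_one_iff.mpr (mul_nonpos_of_nonpos_of_nonneg hlam (sum_nonneg fun t ht => ?_))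
  have ht := Finset.mem_Icc.mp ht
  rcases hval t ht.1 ht.2 ω with h | h <;> simp [h]

lemma integral_exp_mul_sum_Icc_one_le [IsProbabilityMeasure P] {μ lam : ℝ}
    (hlam : lam ≤ 0) (hval : ∀ t, 1 ≤ t → t ≤ n → ∀ ω, X t ω = 0 ∨ X t ω = 1)
    (hmeas : ∀ t, 1 ≤ t → t ≤ n → Measurable[ℱ t] (X t))
    (hcond : ∀ t, 1 ≤ t → t ≤ n → ∀ᵐ ω ∂P, μ ≤ (P[X t | ℱ (t - 1)]) ω) :
    ∫ ω, exp (lam * ∑ t ∈ Icc 1 n, X t ω) ∂P ≤ exp ((exp lam - 1) * μ * n) := by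
  induction n with
  | zero => simp
  | succ n ih =>
    have hval' t h1 (h2 : t ≤ n) := hval t h1 (h2.trans n.le_succ)
    have hmeas' t h1 (h2 : t ≤ n) := hmeas t h1 (h2.trans n.le_succ)
    have hstep := integral_mul_exp_mul_le (ℱ.le n) hlam
      (((measurable_sum_Icc_one ℱ hmeas').const_mul lam).exp.stronglyMeasurable)
      (fun ω => (exp_pos _).le) (exp_mul_sum_Icc_one_le_one hlam hval')
      ((hmeas (n + 1) le_add_self le_rfl).mono (ℱ.le _) le_rfl) (hval (n + 1) le_add_self le_rfl)
      (by simpa using hcond (n + 1) le_add_self le_rfl)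
    calc ∫ ω, exp (lam * ∑ t ∈ Icc 1 (n + 1), X t ω) ∂P
          = ∫ ω, exp (lam * ∑ t ∈ Icc 1 n, X t ω) * exp (lam * X (n + 1) ω) ∂P := by
            simp_rw [sum_Icc_succ_top (Nat.le_add_left 1 n), mul_add, exp_add]
      _ ≤ exp ((exp lam - 1) * μ) * exp ((exp lam - 1) * μ * n) := by
            grw [hstep, ih hval' hmeas' fun t h1 h2 => hcond t h1 (h2.trans n.le_succ)]
      _ = exp ((exp lam - 1) * μ * ↑(n + 1)) := by
            rw [← exp_add]; push_cast; ring_nf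

end Sums

theorem multiplicative_chernoff_bound_general
    {Ω : Type*} {m0 : MeasurableSpace Ω} (P : Measure Ω) [IsProbabilityMeasure P]
    (ℱ : Filtration ℕ m0) (n : ℕ)
    (X : ℕ → Ω → ℝ) (μ : ℝ) (hμ : μ ∈ Set.Icc (0:ℝ) 1)
    (hval : ∀ t, 1 ≤ t → t ≤ n → ∀ ω, X t ω = 0 ∨ X t ω = 1)
    (hmeas : ∀ t, 1 ≤ t → t ≤ n → Measurable[ℱ t] (X t))
    (hcond : ∀ t, 1 ≤ t → t ≤ n → ∀ᵐ ω ∂P, μ ≤ (P[X t | ℱ (t - 1)]) ω)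
    (δ : ℝ) (hδ : δ ∈ Set.Ioo (0:ℝ) 1) :
    P {ω | ∑ t ∈ Finset.Icc 1 n, X t ω ≤ (1 - δ) * n * μ}
      ≤ ENNReal.ofReal (Real.exp (-(δ ^ 2 * n * μ) / 2)) := by
  have hlam : -δ ≤ 0 := by linarith [hδ.1]
  set S : Ω → ℝ := fun ω => ∑ t ∈ Icc 1 n, X t ω
  have hint : Integrable (fun ω => exp (-δ * S ω)) P :=
    integrable_of_nonneg_of_le (C := 1)
      (((measurable_sum_Icc_one ℱ hmeas).mono (ℱ.le n) le_rfl).const_mul _).exp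
      (fun ω => (exp_pos _).le) (exp_mul_sum_Icc_one_le_one hlam hval)
  have hmgf : mgf S P (-δ) ≤ exp ((exp (-δ) - 1) * μ * n) :=
    integral_exp_mul_sum_Icc_one_le ℱ hlam hval hmeas hcond
  have hexponent :
      -(-δ) * ((1 - δ) * n * μ) + (exp (-δ) - 1) * μ * n ≤ -(δ ^ 2 * n * μ) / 2 := by
    nlinarith [mul_le_mul_of_nonneg_right (exp_neg_le_one_sub_add_sq_div_two hδ.1.le)
      (mul_nonneg n.cast_nonneg hμ.1)]
  rw [← ofReal_measureReal]
  refine ENNReal.ofReal_le_ofReal ?_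
  calc P.real {ω | S ω ≤ (1 - δ) * n * μ}
      ≤ exp (-(-δ) * ((1 - δ) * n * μ)) * mgf S P (-δ) :=
        measure_le_le_exp_mul_mgf _ hlam hint
    _ ≤ exp (-(-δ) * ((1 - δ) * n * μ)) * exp ((exp (-δ) - 1) * μ * n) := by gcongr
    _ ≤ exp (-(δ ^ 2 * n * μ) / 2) := by rw [← exp_add]; exact exp_le_exp.mpr hexponent

/-- Multiplicative Chernoff bound for Bernoulli random variables whose conditional
means (given the past) are lower bounded by `μ`. -/
theorem multiplicative_chernoff_bound
    {Ω : Type*} {m0 : MeasurableSpace Ω} (P : Measure Ω) [IsProbabilityMeasure P]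
    (ℱ : Filtration ℕ m0) (n : ℕ) (hn : 1 ≤ n)
    (X : ℕ → Ω → ℝ) (μ : ℝ) (hμ : μ ∈ Set.Icc (0:ℝ) 1)
    (hval : ∀ t, 1 ≤ t → t ≤ n → ∀ ω, X t ω = 0 ∨ X t ω = 1)
    (hmeas : ∀ t, 1 ≤ t → t ≤ n → Measurable[ℱ t] (X t))
    (hcond : ∀ t, 1 ≤ t → t ≤ n → ∀ᵐ ω ∂P, μ ≤ (P[X t | ℱ (t - 1)]) ω)
    (δ : ℝ) (hδ : δ ∈ Set.Ioo (0:ℝ) 1) :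
    P {ω | ∑ t ∈ Finset.Icc 1 n, X t ω ≤ (1 - δ) * n * μ}
      ≤ ENNReal.ofReal (Real.exp (-(δ ^ 2 * n * μ) / 2)) :=
  multiplicative_chernoff_bound_general P ℱ n X μ hμ hval hmeas hcond δ hδ
end

section
/- Let a and b be positive integers with n := a + b - 2 ≥ 1, let μ̂ := (a-1)/n, and let θ be a random variable distributed according to the Beta distribution with parameters a and b. Then for every real T > 1, P( θ - μ̂ > sqrt(2 log T / n) ) ≤ 1/T. -/
/-!
Write `k = a - 1`, `l = b - 1`, `n = k + l`. Past its mode `k / n`, the unnormalised density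
`g u = u ^ k * (1 - u) ^ l` decays at a Gaussian rate: `g (u + ε) ≤ exp (-n ε² / 2) * g u`.
Indeed `(1 + ε / u) ^ k ≤ exp (n ε)`, while with `r = ε / (1 - u) ≥ ε` we have
`(1 - r) ^ l ≤ exp (-l (r + r² / 2))` and `l r ≥ n ε`. Translating the density by `ε` bounds the
mass of `(μ̂ + ε, ∞)` by `exp (-n ε² / 2)` times the mass of `(μ̂, ∞)`, which is at most `1`; the
choice `ε = √(2 log T / n)` makes the factor `1 / T`.
-/

open MeasureTheory Real

noncomputable def betaMeasure (a b : ℕ) : Measure ℝ :=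
  (volume.restrict (Set.Icc (0:ℝ) 1)).withDensity fun x =>
    ENNReal.ofReal
      (x ^ (a - 1) * (1 - x) ^ (b - 1) /
        ∫ t in Set.Icc (0:ℝ) 1, t ^ (a - 1) * (1 - t) ^ (b - 1))

open Set
open scoped ENNReal

lemma one_sub_le_exp_neg_add_sq_div_two {r : ℝ} (h0 : 0 ≤ r) (h1 : r ≤ 1) :
    1 - r ≤ exp (-(r + r ^ 2 / 2)) := by
  rcases h1.lt_or_eq with h1 | rfl
  · have hlog : r + r ^ 2 / 2 ≤ -log (1 - r) := by
      have := sum_le_hasSum (Finset.range 2) (fun i _ => by positivity)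
        (hasSum_pow_div_log_of_abs_lt_one (by rwa [abs_of_nonneg h0]))
      norm_num [Finset.sum_range_succ] at this
      linarith
    calc 1 - r = exp (log (1 - r)) := (exp_log (by linarith)).symm
      _ ≤ exp (-(r + r ^ 2 / 2)) := exp_le_exp.2 (by linarith)
  · simp only [sub_self]; positivity

lemma add_pow_le_pow_mul_exp (k : ℕ) {n u ε : ℝ} (hn : 0 ≤ n) (hu : 0 ≤ u) (hε : 0 ≤ ε)
    (hk : k ≤ n * u) : (u + ε) ^ k ≤ u ^ k * exp (n * ε) := by
  rcases hu.lt_or_eq with hu | rfl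
  · have hkε : k * (ε / u) ≤ n * ε := by
      rw [mul_div_assoc', div_le_iff₀ hu]; nlinarith
    calc (u + ε) ^ k = u ^ k * (ε / u + 1) ^ k := by
          rw [← mul_pow]; congr 1; field_simp; ring
      _ ≤ u ^ k * exp (ε / u) ^ k := by
          gcongr; exact add_one_le_exp _
      _ = u ^ k * exp (k * (ε / u)) := by rw [← exp_nat_mul]
      _ ≤ u ^ k * exp (n * ε) := by gcongr
  · obtain rfl : k = 0 := by exact_mod_cast le_antisymm (by simpa using hk) k.cast_nonneg
    simpa using mul_nonneg hn hε

lemma one_sub_add_pow_le_pow_mul_exp (l : ℕ) {n u ε : ℝ} (hn : 0 ≤ n) (hu : 0 ≤ u) (hε : 0 ≤ ε)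
    (hu1 : u < 1) (huε : u + ε ≤ 1) (hl : n * (1 - u) ≤ l) :
    (1 - (u + ε)) ^ l ≤ (1 - u) ^ l * exp (-(n * ε + n * ε ^ 2 / 2)) := by
  have h1u : 0 < 1 - u := by linarith
  set r := ε / (1 - u) with hr
  have hr0 : 0 ≤ r := by positivity
  have hr1 : r ≤ 1 := by rw [div_le_one h1u]; linarith
  have hεr : ε ≤ r := by rw [le_div_iff₀ h1u]; nlinarith
  have hexp : n * ε + n * ε ^ 2 / 2 ≤ l * (r + r ^ 2 / 2) := by
    have hrε : (1 - u) * r = ε := by rw [hr]; field_simp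
    calc n * ε + n * ε ^ 2 / 2 = n * (ε + ε * ε / 2) := by ring
      _ ≤ n * (ε + ε * r / 2) := by gcongr
      _ = n * (1 - u) * (r + r ^ 2 / 2) := by rw [← hrε]; ring
      _ ≤ l * (r + r ^ 2 / 2) := by gcongr
  calc (1 - (u + ε)) ^ l = (1 - u) ^ l * (1 - r) ^ l := by
        rw [← mul_pow]; congr 1; rw [hr]; field_simp; ring
    _ ≤ (1 - u) ^ l * exp (-(r + r ^ 2 / 2)) ^ l := by
        gcongr
        exact one_sub_le_exp_neg_add_sq_div_two hr0 hr1
    _ = (1 - u) ^ l * exp (-(l * (r + r ^ 2 / 2))) := by rw [← exp_nat_mul]; ring_nf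
    _ ≤ (1 - u) ^ l * exp (-(n * ε + n * ε ^ 2 / 2)) := by gcongr

lemma pow_mul_one_sub_pow_add_le (k l : ℕ) {u ε : ℝ} (hu : 0 ≤ u) (hε : 0 < ε)
    (huε : u + ε ≤ 1) (hk : k ≤ (k + l) * u) :
    (u + ε) ^ k * (1 - (u + ε)) ^ l ≤ exp (-((k + l) * ε ^ 2 / 2)) * (u ^ k * (1 - u) ^ l) := by
  have hn : (0 : ℝ) ≤ k + l := by positivity
  have hl : (k + l) * (1 - u) ≤ (l : ℝ) := by linarith
  calc (u + ε) ^ k * (1 - (u + ε)) ^ l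
      ≤ (u ^ k * exp ((k + l) * ε)) *
          ((1 - u) ^ l * exp (-((k + l) * ε + (k + l) * ε ^ 2 / 2))) := by
        refine mul_le_mul (add_pow_le_pow_mul_exp k hn hu hε.le hk)
          (one_sub_add_pow_le_pow_mul_exp l hn hu hε.le (by linarith) huε hl) ?_ (by positivity)
        exact pow_nonneg (by linarith) _
    _ = exp (-((k + l) * ε ^ 2 / 2)) * (u ^ k * (1 - u) ^ l) := by
        rw [show -((k + l) * ε ^ 2 / 2) = (k + l) * ε + -((k + l) * ε + (k + l) * ε ^ 2 / 2)
          by ring, exp_add]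
        ring

lemma withDensity_Ioi_add_le {f : ℝ → ℝ≥0∞} {c : ℝ≥0∞} (hc : c ≠ ∞) {p ε : ℝ}
    (hf : ∀ u > p, f (u + ε) ≤ c * f u) :
    volume.withDensity f (Ioi (p + ε)) ≤ c * volume.withDensity f (Ioi p) := by
  have hshift := (measurePreserving_add_right volume ε).setLIntegral_comp_preimage_emb
    (measurableEmbedding_addRight ε) f (Ioi (p + ε))
  rw [preimage_add_const_Ioi, add_sub_cancel_right] at hshift
  rw [withDensity_apply _ measurableSet_Ioi, withDensity_apply _ measurableSet_Ioi,
    ← lintegral_const_mul' _ _ hc, ← hshift]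
  exact setLIntegral_mono' measurableSet_Ioi hf

lemma betaMeasure_Ioi_add_le (k l : ℕ) {p ε : ℝ} (hp : 0 ≤ p) (hε : 0 < ε)
    (hpk : k ≤ (k + l) * p) :
    betaMeasure (k + 1) (l + 1) (Ioi (p + ε)) ≤
      ENNReal.ofReal (exp (-((k + l) * ε ^ 2 / 2))) * betaMeasure (k + 1) (l + 1) (Ioi p) := by
  rw [betaMeasure, ← withDensity_indicator measurableSet_Icc]
  simp only [Nat.add_sub_cancel]
  refine withDensity_Ioi_add_le ENNReal.ofReal_ne_top fun u hu => ?_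
  by_cases huε : u + ε ∈ Icc (0 : ℝ) 1
  · have hu01 : u ∈ Icc (0 : ℝ) 1 := ⟨by linarith, by linarith [huε.2]⟩
    have hB : 0 ≤ ∫ t in Icc (0 : ℝ) 1, t ^ k * (1 - t) ^ l :=
      setIntegral_nonneg measurableSet_Icc fun t ht => by
        have := ht.2; have := ht.1; positivity
    rw [indicator_of_mem huε, indicator_of_mem hu01, ← ENNReal.ofReal_mul (exp_pos _).le,
      mul_div_assoc']
    exact ENNReal.ofReal_le_ofReal (div_le_div_of_nonneg_right
      (pow_mul_one_sub_pow_add_le k l (hp.trans hu.le) hε huε.2 (hpk.trans (by gcongr))) hB)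
  · rw [indicator_of_notMem huε]
    exact bot_le

/-- Upper tail bound for a Beta posterior sample: if `θ ~ Beta(a, b)` with
`n = a + b - 2 ≥ 1` observations and empirical mean `μ̂ = (a-1)/n`, then
`P(θ - μ̂ > sqrt(2 log T / n)) ≤ 1/T` for every `T > 1`. -/
theorem beta_sample_upper_tail
    {Ω : Type*} [MeasurableSpace Ω] (P : Measure Ω) [IsProbabilityMeasure P]
    (a b : ℕ) (ha : 0 < a) (hb : 0 < b) (hn : 1 ≤ a + b - 2)
    (θ : Ω → ℝ) (hθ : Measurable θ) (hdist : P.map θ = betaMeasure a b)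
    (T : ℝ) (hT : 1 < T) :
    P {ω | θ ω - ((a : ℝ) - 1) / ((a : ℝ) + b - 2)
        > Real.sqrt (2 * Real.log T / ((a : ℝ) + b - 2))}
      ≤ ENNReal.ofReal (1 / T) := by
  obtain ⟨k, rfl⟩ := Nat.exists_eq_add_one_of_ne_zero ha.ne'
  obtain ⟨l, rfl⟩ := Nat.exists_eq_add_one_of_ne_zero hb.ne'
  have hkl : (1 : ℝ) ≤ k + l := by exact_mod_cast (by omega : 1 ≤ k + l)
  have hk : ((k + 1 : ℕ) : ℝ) - 1 = k := by push_cast; ring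
  have hn' : ((k + 1 : ℕ) : ℝ) + ((l + 1 : ℕ) : ℝ) - 2 = k + l := by push_cast; ring
  rw [hk, hn']
  set ε := √(2 * log T / (k + l))
  have hε : 0 < ε := sqrt_pos.2 (by have := log_pos hT; positivity)
  have htail : exp (-((k + l) * ε ^ 2 / 2)) = 1 / T := by
    rw [sq_sqrt (by have := log_pos hT; positivity), mul_div_cancel₀ _ (by positivity),
      mul_div_cancel_left₀ _ two_ne_zero, exp_neg, exp_log (by linarith), one_div]
  have hevent : {ω | θ ω - k / (k + l) > ε} = θ ⁻¹' Ioi (k / (k + l) + ε) := by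
    ext ω
    simp only [mem_ofPred_eq, mem_preimage, mem_Ioi, gt_iff_lt, lt_sub_iff_add_lt']
  -- the total mass comes from `hdist`, so the normalising integral is never evaluated
  have : IsProbabilityMeasure (betaMeasure (k + 1) (l + 1)) :=
    hdist ▸ Measure.isProbabilityMeasure_map hθ.aemeasurable
  calc P {ω | θ ω - k / (k + l) > ε}
      = betaMeasure (k + 1) (l + 1) (Ioi (k / (k + l) + ε)) := by
        rw [hevent, ← Measure.map_apply hθ measurableSet_Ioi, hdist]
    _ ≤ ENNReal.ofReal (1 / T) * betaMeasure (k + 1) (l + 1) (Ioi (k / (k + l))) := by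
        rw [← htail]
        exact betaMeasure_Ioi_add_le k l (by positivity) hε
          (by rw [mul_div_cancel₀ _ (by positivity)])
    _ ≤ ENNReal.ofReal (1 / T) := mul_le_of_le_one_right' prob_le_one
end

section
/- Let a and b be positive integers with n := a + b - 2 ≥ 1, let μ̂ := (a-1)/n, and let θ be a random variable distributed according to the Beta distribution with parameters a and b. Then for every real T > 1, P( μ̂ - θ > sqrt(2 log T / n) ) ≤ 1/T. -/
open MeasureTheory Real

/-!
Write `g t = t ^ α * (1 - t) ^ β` with `α = a - 1`, `β = b - 1`, `n = α + β`, so that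
`P(θ < x) = ∫₀ˣ g / ∫₀¹ g`, and take `x = p - ε` with `p = α / n` the mode of `g`.
Since `log g` is concave, `g` lies below the exponential tangent to it at `x`, with slope
`M = (log g)'(x)`, and above the exponential chord from `x` to `p`, with slope `L ≤ M`.
Integrating, `∫₀ˣ g ≤ g x / M` and `∫ₓᵖ g ≥ (g p / g x - 1) · g x / L`, hence
`∫₀¹ g ≥ (g p / g x) ∫₀ˣ g`. Finally `-log (1 - u) ≥ u + u² / 2` (strong concavity of
`log g` near the mode) gives `g p / g x ≥ exp (n ε² / 2) = T`.
-/

open Set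

lemma pow_le_pow_mul_exp {y z : ℝ} (hy : 0 ≤ y) (hz : 0 < z) (k : ℕ) :
    y ^ k ≤ z ^ k * exp (k * (y - z) / z) := by
  have hyz : y / z ≤ exp ((y - z) / z) := by
    simpa [sub_div, div_self hz.ne'] using add_one_le_exp ((y - z) / z)
  calc y ^ k = z ^ k * (y / z) ^ k := by rw [div_pow, mul_div_cancel₀ _ (pow_pos hz k).ne']
    _ ≤ z ^ k * exp ((y - z) / z) ^ k := by gcongr
    _ = z ^ k * exp (k * (y - z) / z) := by rw [← exp_nat_mul, mul_div_assoc]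

lemma one_sub_le_exp_neg_add_sq {u : ℝ} (hu : 0 ≤ u) : 1 - u ≤ exp (-(u + u ^ 2 / 2)) := by
  rcases lt_or_ge u 1 with hu1 | hu1
  · have hseries := hasSum_pow_div_log_of_abs_lt_one (abs_lt.2 ⟨by linarith, hu1⟩)
    have hlog : u + u ^ 2 / 2 ≤ -log (1 - u) := by
      simpa [Finset.sum_range_succ, one_add_one_eq_two] using
        sum_le_hasSum (Finset.range 2) (fun i _ => by positivity) hseries
    calc 1 - u = exp (log (1 - u)) := (exp_log (by linarith)).symm
      _ ≤ exp (-(u + u ^ 2 / 2)) := exp_le_exp.2 (by linarith)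
  · linarith [exp_pos (-(u + u ^ 2 / 2))]

lemma sub_pow_le_pow_mul_exp {p ε : ℝ} (hp : 0 < p) (hε : 0 ≤ ε) (hεp : ε ≤ p)
    (k : ℕ) :
    (p - ε) ^ k ≤ p ^ k * exp (-(k * (ε / p + (ε / p) ^ 2 / 2))) := by
  have hu1 : 0 ≤ 1 - ε / p := sub_nonneg.2 ((div_le_one hp).2 hεp)
  calc (p - ε) ^ k = p ^ k * (1 - ε / p) ^ k := by
        rw [← mul_pow, mul_one_sub, mul_div_cancel₀ _ hp.ne']
    _ ≤ p ^ k * exp (-(ε / p + (ε / p) ^ 2 / 2)) ^ k := by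
        gcongr
        exact one_sub_le_exp_neg_add_sq (by positivity)
    _ = p ^ k * exp (-(k * (ε / p + (ε / p) ^ 2 / 2))) := by rw [← exp_nat_mul, mul_neg]

lemma integral_exp_mul_sub {c : ℝ} (hc : c ≠ 0) (x a b : ℝ) :
    ∫ t in a..b, exp (c * (t - x)) = (exp (c * (b - x)) - exp (c * (a - x))) / c := by
  simp_rw [mul_sub]
  rw [intervalIntegral.integral_comp_mul_sub (f := exp) hc, integral_exp, smul_eq_mul]
  field_simp

lemma exp_sub_one_mul_integral_le_integral {g : ℝ → ℝ} {u x p L M : ℝ} (hux : u ≤ x)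
    (hxp : x ≤ p) (hL : 0 < L) (hLM : L ≤ M) (hgx : 0 ≤ g x)
    (hgu : IntervalIntegrable g volume u x) (hgp : IntervalIntegrable g volume x p)
    (hleft : ∀ t ∈ Icc u x, g t ≤ g x * exp (M * (t - x)))
    (hmid : ∀ t ∈ Icc x p, g x * exp (L * (t - x)) ≤ g t) :
    (exp (L * (p - x)) - 1) * ∫ t in u..x, g t ≤ ∫ t in x..p, g t := by
  have hM : 0 < M := hL.trans_le hLM
  have hexp : ∀ c a b : ℝ, IntervalIntegrable (fun t => g x * exp (c * (t - x))) volume a b :=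
    fun c a b => (by fun_prop : Continuous fun t => g x * exp (c * (t - x))).intervalIntegrable a b
  have hleft_int : ∫ t in u..x, g t ≤ g x / M :=
    calc ∫ t in u..x, g t ≤ ∫ t in u..x, g x * exp (M * (t - x)) :=
          intervalIntegral.integral_mono_on hux hgu (hexp M u x) hleft
      _ = g x * (1 - exp (M * (u - x))) / M := by
          rw [intervalIntegral.integral_const_mul, integral_exp_mul_sub hM.ne', sub_self,
            mul_zero, exp_zero, mul_div_assoc]
      _ ≤ g x / M := by
          gcongr
          exact mul_le_of_le_one_right hgx (by linarith [exp_pos (M * (u - x))])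
  have hmid_int : g x * (exp (L * (p - x)) - 1) / L ≤ ∫ t in x..p, g t :=
    calc g x * (exp (L * (p - x)) - 1) / L = ∫ t in x..p, g x * exp (L * (t - x)) := by
          rw [intervalIntegral.integral_const_mul, integral_exp_mul_sub hL.ne', sub_self,
            mul_zero, exp_zero, mul_div_assoc]
      _ ≤ ∫ t in x..p, g t := intervalIntegral.integral_mono_on hxp (hexp L x p) hgp hmid
  have hgrowth : 0 ≤ exp (L * (p - x)) - 1 := by
    have : 0 ≤ L * (p - x) := mul_nonneg hL.le (by linarith)
    linarith [add_one_le_exp (L * (p - x))]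
  calc (exp (L * (p - x)) - 1) * ∫ t in u..x, g t ≤ (exp (L * (p - x)) - 1) * (g x / M) :=
        mul_le_mul_of_nonneg_left hleft_int hgrowth
    _ ≤ (exp (L * (p - x)) - 1) * (g x / L) := by gcongr
    _ = g x * (exp (L * (p - x)) - 1) / L := by ring
    _ ≤ ∫ t in x..p, g t := hmid_int

lemma mul_exp_le_of_rpow_mul_rpow_le {f : ℝ → ℝ} {x p : ℝ} (hxp : x < p) (hfx : 0 < f x)
    (hfp : 0 < f p)
    (hf : ∀ s ∈ Icc (0 : ℝ) 1, f x ^ (1 - s) * f p ^ s ≤ f ((1 - s) * x + s * p))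
    {t : ℝ} (ht : t ∈ Icc x p) :
    f x * exp (log (f p / f x) / (p - x) * (t - x)) ≤ f t := by
  have hpx : 0 < p - x := sub_pos.2 hxp
  set s := (t - x) / (p - x)
  have hs : s ∈ Icc (0 : ℝ) 1 :=
    ⟨div_nonneg (by linarith [ht.1]) hpx.le, (div_le_one hpx).2 (by linarith [ht.2])⟩
  have ht_eq : (1 - s) * x + s * p = t := by
    simp only [s]
    field_simp
    ring
  calc f x * exp (log (f p / f x) / (p - x) * (t - x))
      = f x ^ (1 - s) * f p ^ s := by
        rw [rpow_def_of_pos hfx, rpow_def_of_pos hfp, ← exp_add, log_div hfp.ne' hfx.ne']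
        nth_rewrite 1 [← exp_log hfx]
        rw [← exp_add]
        congr 1
        simp only [s]
        ring
    _ ≤ f t := ht_eq ▸ hf s hs

lemma cast_add_pos_of_le_div {α β : ℕ} {ε : ℝ} (hε : 0 < ε)
    (hεp : ε ≤ α / (α + β)) : (0 : ℝ) < α + β := by
  by_contra h
  have h0 : (α : ℝ) + β = 0 := le_antisymm (not_lt.1 h) (by positivity)
  rw [h0, div_zero] at hεp
  linarith

def betaKernel (α β : ℕ) (t : ℝ) : ℝ := t ^ α * (1 - t) ^ β

namespace betaKernel

variable {α β : ℕ}

lemma nonneg {t : ℝ} (ht0 : 0 ≤ t) (ht1 : t ≤ 1) : 0 ≤ betaKernel α β t :=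
  mul_nonneg (pow_nonneg ht0 α) (pow_nonneg (sub_nonneg.2 ht1) β)

lemma pos {t : ℝ} (ht0 : 0 < t) (ht1 : t < 1) : 0 < betaKernel α β t :=
  mul_pos (pow_pos ht0 α) (pow_pos (sub_pos.2 ht1) β)

lemma continuous : Continuous (betaKernel α β) := by
  unfold betaKernel
  fun_prop

/-- The tangent-line bound for the concave function `log ∘ betaKernel α β` at `x`. -/
lemma le_mul_exp {x t : ℝ} (hx0 : 0 < x) (hx1 : x < 1) (ht0 : 0 ≤ t) (ht1 : t ≤ 1) :
    betaKernel α β t ≤ betaKernel α β x * exp ((α / x - β / (1 - x)) * (t - x)) := by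
  have hx1' : 0 < 1 - x := sub_pos.2 hx1
  calc betaKernel α β t
      ≤ (x ^ α * exp (α * (t - x) / x)) *
          ((1 - x) ^ β * exp (β * (1 - t - (1 - x)) / (1 - x))) :=
        mul_le_mul (pow_le_pow_mul_exp ht0 hx0 α)
          (pow_le_pow_mul_exp (sub_nonneg.2 ht1) hx1' β) (by positivity) (by positivity)
    _ = betaKernel α β x * exp ((α / x - β / (1 - x)) * (t - x)) := by
        rw [betaKernel, mul_mul_mul_comm, ← exp_add]
        congr 2
        field_simp
        ring

/-- Log-concavity, in the multiplicative form that still makes sense when `p = 1`. -/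
lemma rpow_mul_rpow_le {x p s : ℝ} (hx0 : 0 ≤ x) (hx1 : x ≤ 1) (hp0 : 0 ≤ p) (hp1 : p ≤ 1)
    (hs0 : 0 ≤ s) (hs1 : s ≤ 1) :
    betaKernel α β x ^ (1 - s) * betaKernel α β p ^ s ≤
      betaKernel α β ((1 - s) * x + s * p) := by
  have hx1' : 0 ≤ 1 - x := sub_nonneg.2 hx1
  have hp1' : 0 ≤ 1 - p := sub_nonneg.2 hp1
  have hmean : x ^ (1 - s) * p ^ s ≤ (1 - s) * x + s * p :=
    geom_mean_le_arith_mean2_weighted (by linarith) hs0 hx0 hp0 (by ring)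
  have hmean' : (1 - x) ^ (1 - s) * (1 - p) ^ s ≤ 1 - ((1 - s) * x + s * p) := by
    have := geom_mean_le_arith_mean2_weighted (by linarith) hs0 hx1' hp1' (sub_add_cancel 1 s)
    linarith
  calc betaKernel α β x ^ (1 - s) * betaKernel α β p ^ s
      = (x ^ (1 - s) * p ^ s) ^ α * ((1 - x) ^ (1 - s) * (1 - p) ^ s) ^ β := by
        simp only [betaKernel]
        rw [mul_rpow (by positivity) (by positivity), mul_rpow (by positivity) (by positivity),
          mul_pow, mul_pow, rpow_pow_comm hx0, rpow_pow_comm hp0, rpow_pow_comm hx1',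
          rpow_pow_comm hp1']
        ring
    _ ≤ betaKernel α β ((1 - s) * x + s * p) := by
        unfold betaKernel
        gcongr

lemma sub_mul_exp_le {ε : ℝ} (hε : 0 < ε) (hεp : ε ≤ α / (α + β)) :
    betaKernel α β (α / (α + β) - ε) * exp ((α + β) * ε ^ 2 / 2) ≤
      betaKernel α β (α / (α + β)) := by
  set n : ℝ := α + β
  set p : ℝ := α / n
  have hn : 0 < n := cast_add_pos_of_le_div hε hεp
  have hp0 : 0 < p := hε.trans_le hεp
  have hα : (α : ℝ) = n * p := by simp only [p]; field_simp
  have hβ : (β : ℝ) = n * (1 - p) := by rw [mul_one_sub, ← hα]; simp [n]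
  have hp1 : p ≤ 1 := by nlinarith [(Nat.cast_nonneg β : (0 : ℝ) ≤ β)]
  have hleft : (p - ε) ^ α ≤ p ^ α * exp (-(n * ε + n * ε ^ 2 / 2)) := by
    have hexponent : n * ε + n * ε ^ 2 / 2 ≤ α * (ε / p + (ε / p) ^ 2 / 2) := by
      have hsq : n * ε ^ 2 / 2 ≤ n * ε ^ 2 / (2 * p) :=
        div_le_div_of_nonneg_left (by positivity) (by positivity) (by linarith)
      have hexpand : α * (ε / p + (ε / p) ^ 2 / 2) = n * ε + n * ε ^ 2 / (2 * p) := by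
        rw [hα]
        field_simp
      linarith
    calc (p - ε) ^ α ≤ p ^ α * exp (-(α * (ε / p + (ε / p) ^ 2 / 2))) :=
          sub_pow_le_pow_mul_exp hp0 hε.le hεp α
      _ ≤ p ^ α * exp (-(n * ε + n * ε ^ 2 / 2)) := by gcongr
  have hright : (1 - (p - ε)) ^ β ≤ (1 - p) ^ β * exp (n * ε) := by
    rcases Nat.eq_zero_or_pos β with hβ0 | hβ0
    · simp [hβ0, one_le_exp (by positivity : 0 ≤ n * ε)]
    · have hp1' : 0 < 1 - p := by
        have : (0 : ℝ) < β := by exact_mod_cast hβ0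
        nlinarith
      calc (1 - (p - ε)) ^ β ≤ (1 - p) ^ β * exp (β * (1 - (p - ε) - (1 - p)) / (1 - p)) :=
            pow_le_pow_mul_exp (by linarith) hp1' β
        _ = (1 - p) ^ β * exp (n * ε) := by rw [hβ]; congr 2; field_simp; ring
  have h1x : 0 ≤ 1 - (p - ε) := by linarith
  calc betaKernel α β (p - ε) * exp (n * ε ^ 2 / 2)
      ≤ (p ^ α * exp (-(n * ε + n * ε ^ 2 / 2))) * ((1 - p) ^ β * exp (n * ε)) *
          exp (n * ε ^ 2 / 2) := by
        unfold betaKernel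
        gcongr
    _ = betaKernel α β p := by
        rw [betaKernel, mul_mul_mul_comm, mul_assoc, ← exp_add, ← exp_add]
        ring_nf
        simp

lemma div_mul_integral_le {x p : ℝ} (hx0 : 0 < x) (hxp : x < p) (hp1 : p ≤ 1)
    (hgxp : betaKernel α β x < betaKernel α β p) :
    betaKernel α β p / betaKernel α β x * ∫ t in (0 : ℝ)..x, betaKernel α β t ≤
      ∫ t in (0 : ℝ)..p, betaKernel α β t := by
  set g := betaKernel α β
  have hx1 : x < 1 := hxp.trans_le hp1
  have hgx : 0 < g x := pos hx0 hx1
  have hgp : 0 < g p := hgx.trans hgxp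
  set L := log (g p / g x) / (p - x)
  set M := α / x - β / (1 - x)
  have hLp : exp (L * (p - x)) = g p / g x := by
    rw [div_mul_cancel₀ _ (sub_pos.2 hxp).ne', exp_log (div_pos hgp hgx)]
  have hL : 0 < L := div_pos (log_pos ((one_lt_div hgx).2 hgxp)) (sub_pos.2 hxp)
  have hLM : L ≤ M := by
    have hp_tangent : g p ≤ g x * exp (M * (p - x)) := le_mul_exp hx0 hx1 (hx0.trans hxp).le hp1
    rw [div_le_iff₀ (sub_pos.2 hxp), log_le_iff_le_exp (div_pos hgp hgx), div_le_iff₀ hgx,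
      mul_comm]
    exact hp_tangent
  have hint : ∀ u v : ℝ, IntervalIntegrable g volume u v :=
    fun u v => betaKernel.continuous.intervalIntegrable u v
  have hcompare := exp_sub_one_mul_integral_le_integral hx0.le hxp.le hL hLM hgx.le
    (hint 0 x) (hint x p) (fun t ht => le_mul_exp hx0 hx1 ht.1 (ht.2.trans hx1.le))
    fun t => mul_exp_le_of_rpow_mul_rpow_le hxp hgx hgp fun s hs =>
      rpow_mul_rpow_le hx0.le hx1.le (hx0.trans hxp).le hp1 hs.1 hs.2
  rw [hLp] at hcompare
  calc g p / g x * ∫ t in (0 : ℝ)..x, g t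
      = (∫ t in (0 : ℝ)..x, g t) + (g p / g x - 1) * ∫ t in (0 : ℝ)..x, g t := by ring
    _ ≤ (∫ t in (0 : ℝ)..x, g t) + ∫ t in x..p, g t := by linarith
    _ = ∫ t in (0 : ℝ)..p, g t :=
        intervalIntegral.integral_add_adjacent_intervals (hint 0 x) (hint x p)

theorem exp_mul_integral_le {ε : ℝ} (hε : 0 < ε) (hεp : ε < α / (α + β)) :
    exp ((α + β) * ε ^ 2 / 2) * ∫ t in (0 : ℝ)..(α / (α + β) - ε), betaKernel α β t ≤
      ∫ t in (0 : ℝ)..1, betaKernel α β t := by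
  set p : ℝ := α / (α + β)
  set x := p - ε
  set g := betaKernel α β
  have hn : (0 : ℝ) < α + β := cast_add_pos_of_le_div hε hεp.le
  have hx0 : 0 < x := sub_pos.2 hεp
  have hxp : x < p := sub_lt_self p hε
  have hp1 : p ≤ 1 := div_le_one_of_le₀ (by simp) hn.le
  have hgx : 0 < g x := pos hx0 (hxp.trans_le hp1)
  have hratio : exp ((α + β) * ε ^ 2 / 2) ≤ g p / g x := by
    rw [le_div_iff₀ hgx, mul_comm]
    exact sub_mul_exp_le hε hεp.le
  have hgxp : g x < g p :=
    (one_lt_div hgx).1 ((one_lt_exp_iff.2 (by positivity)).trans_le hratio)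
  have hx1 : x ≤ 1 := (hxp.trans_le hp1).le
  have hhead : 0 ≤ ∫ t in (0 : ℝ)..x, g t :=
    intervalIntegral.integral_nonneg hx0.le fun t ht => nonneg ht.1 (ht.2.trans hx1)
  have htail : ∫ t in (0 : ℝ)..p, g t ≤ ∫ t in (0 : ℝ)..1, g t :=
    intervalIntegral.integral_mono_interval le_rfl (hx0.trans hxp).le hp1
      ((ae_restrict_iff' measurableSet_Ioc).2 <| ae_of_all _ fun t ht => nonneg ht.1.le ht.2)
      (betaKernel.continuous.intervalIntegrable _ _)
  calc exp ((α + β) * ε ^ 2 / 2) * ∫ t in (0 : ℝ)..x, g t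
      ≤ g p / g x * ∫ t in (0 : ℝ)..x, g t := mul_le_mul_of_nonneg_right hratio hhead
    _ ≤ ∫ t in (0 : ℝ)..p, g t := div_mul_integral_le hx0 hxp hp1 hgxp
    _ ≤ ∫ t in (0 : ℝ)..1, g t := htail

end betaKernel

lemma betaMeasure_Iio (a b : ℕ) {x : ℝ} (hx0 : 0 ≤ x) (hx1 : x ≤ 1) :
    betaMeasure a b (Iio x) =
      ENNReal.ofReal ((∫ t in (0 : ℝ)..x, betaKernel (a - 1) (b - 1) t) /
        ∫ t in (0 : ℝ)..1, betaKernel (a - 1) (b - 1) t) := by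
  set g := betaKernel (a - 1) (b - 1)
  have hset : Iio x ∩ Icc (0 : ℝ) 1 = Ico 0 x := by
    ext t
    simp only [mem_inter_iff, mem_Iio, mem_Icc, mem_Ico]
    constructor
    · rintro ⟨htx, ht0, -⟩
      exact ⟨ht0, htx⟩
    · rintro ⟨ht0, htx⟩
      exact ⟨htx, ht0, by linarith⟩
  have hB :
      ∫ t in Icc (0 : ℝ) 1, t ^ (a - 1) * (1 - t) ^ (b - 1) = ∫ t in (0 : ℝ)..1, g t := by
    rw [integral_Icc_eq_integral_Ioc, ← intervalIntegral.integral_of_le zero_le_one]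
    rfl
  have hB0 : 0 ≤ ∫ t in (0 : ℝ)..1, g t :=
    intervalIntegral.integral_nonneg zero_le_one fun t ht => betaKernel.nonneg ht.1 ht.2
  have hdensity_nonneg :
      0 ≤ᵐ[volume.restrict (Ico 0 x)] fun t => g t / ∫ t in (0 : ℝ)..1, g t :=
    (ae_restrict_iff' measurableSet_Ico).2 <| ae_of_all _ fun t ht =>
      div_nonneg (betaKernel.nonneg ht.1 (ht.2.le.trans hx1)) hB0
  rw [betaMeasure, withDensity_apply _ measurableSet_Iio,
    Measure.restrict_restrict measurableSet_Iio, hset, hB]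
  change ∫⁻ t in Ico 0 x, ENNReal.ofReal (g t / ∫ t in (0 : ℝ)..1, g t) = _
  rw [← ofReal_integral_eq_lintegral_ofReal
      ((betaKernel.continuous.div_const _).integrableOn_Icc.mono_set Ico_subset_Icc_self)
      hdensity_nonneg,
    setIntegral_congr_set Ico_ae_eq_Ioc, ← intervalIntegral.integral_of_le hx0,
    intervalIntegral.integral_div]

theorem betaMeasure_Iio_sub_le (α β : ℕ) {ε : ℝ} (hε : 0 < ε) :
    betaMeasure (α + 1) (β + 1) (Iio (α / (α + β) - ε)) ≤
      ENNReal.ofReal (exp (-((α + β) * ε ^ 2 / 2))) := by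
  set x := (α : ℝ) / (α + β) - ε
  rcases le_or_gt x 0 with hx0 | hx0
  · calc betaMeasure (α + 1) (β + 1) (Iio x) ≤ betaMeasure (α + 1) (β + 1) (Iio 0) :=
          measure_mono (Iio_subset_Iio hx0)
      _ = 0 := by simp [betaMeasure_Iio (α + 1) (β + 1) le_rfl zero_le_one]
      _ ≤ _ := zero_le
  have hεp : ε < α / (α + β) := sub_pos.1 hx0
  have hx1 : x ≤ 1 := (sub_le_self _ hε.le).trans
    (div_le_one_of_le₀ (by simp) (cast_add_pos_of_le_div hε hεp.le).le)
  rw [betaMeasure_Iio (α + 1) (β + 1) hx0.le hx1, Nat.add_sub_cancel, Nat.add_sub_cancel]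
  refine ENNReal.ofReal_le_ofReal (div_le_of_le_mul₀
    (intervalIntegral.integral_nonneg zero_le_one fun t ht => betaKernel.nonneg ht.1 ht.2)
    (exp_pos _).le ?_)
  rw [exp_neg, inv_mul_eq_div, le_div_iff₀ (exp_pos _), mul_comm]
  exact betaKernel.exp_mul_integral_le hε hεp

theorem beta_sample_lower_tail_general
    {Ω : Type*} [MeasurableSpace Ω] (P : Measure Ω)
    (a b : ℕ) (ha : 0 < a) (hb : 0 < b) (hn : 1 ≤ a + b - 2)
    (θ : Ω → ℝ) (hθ : Measurable θ) (hdist : P.map θ = betaMeasure a b)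
    (T : ℝ) (hT : 1 < T) :
    P {ω | ((a : ℝ) - 1) / ((a : ℝ) + b - 2) - θ ω
        > Real.sqrt (2 * Real.log T / ((a : ℝ) + b - 2))}
      ≤ ENNReal.ofReal (1 / T) := by
  obtain ⟨α, rfl⟩ : ∃ α, a = α + 1 := ⟨a - 1, by omega⟩
  obtain ⟨β, rfl⟩ : ∃ β, b = β + 1 := ⟨b - 1, by omega⟩
  have hαβ : (0 : ℝ) < α + β := by exact_mod_cast (by omega : 0 < α + β)
  have hlogT : 0 < log T := log_pos hT
  set ε := sqrt (2 * log T / (α + β))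
  have hε : 0 < ε := sqrt_pos.2 (by positivity)
  have hT_eq : exp (-((α + β) * ε ^ 2 / 2)) = 1 / T := by
    rw [sq_sqrt (by positivity), mul_div_cancel₀ _ hαβ.ne',
      mul_div_cancel_left₀ _ two_ne_zero, exp_neg, exp_log (by linarith), one_div]
  refine (measure_mono (t := θ ⁻¹' Iio ((α : ℝ) / (α + β) - ε)) fun ω hω => ?_).trans ?_
  · rw [mem_ofPred_eq] at hω
    push_cast at hω
    rw [show (α : ℝ) + 1 + (β + 1) - 2 = α + β by ring, add_sub_cancel_right] at hω
    exact (lt_sub_comm.1 hω :)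
  rw [← Measure.map_apply hθ measurableSet_Iio, hdist, ← hT_eq]
  exact betaMeasure_Iio_sub_le α β hε

/-- Lower tail bound for a Beta posterior sample: if `θ ~ Beta(a, b)` with
`n = a + b - 2 ≥ 1` observations and empirical mean `μ̂ = (a-1)/n`, then
`P(μ̂ - θ > sqrt(2 log T / n)) ≤ 1/T` for every `T > 1`. -/
theorem beta_sample_lower_tail
    {Ω : Type*} [MeasurableSpace Ω] (P : Measure Ω) [IsProbabilityMeasure P]
    (a b : ℕ) (ha : 0 < a) (hb : 0 < b) (hn : 1 ≤ a + b - 2)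
    (θ : Ω → ℝ) (hθ : Measurable θ) (hdist : P.map θ = betaMeasure a b)
    (T : ℝ) (hT : 1 < T) :
    P {ω | ((a : ℝ) - 1) / ((a : ℝ) + b - 2) - θ ω
        > Real.sqrt (2 * Real.log T / ((a : ℝ) + b - 2))}
      ≤ ENNReal.ofReal (1 / T) :=
  beta_sample_lower_tail_general P a b ha hb hn θ hθ hdist T hT
end

section
/- Let S be a nonempty finite index set of cardinality s partitioned into disjoint subsets S₁ and S₂ (S = S₁ ∪ S₂), let B > 0, Δ > 0, let k̃ be a positive integer, and let ε > 0 satisfy Δ > 2B(k̃² + 2)ε. Suppose we are given real numbers θ_i, μ̂_i, μ_i for each i ∈ S, and nonnegative reals c_i for each i ∈ S₂, such that: (1) |θ_i - μ̂_i| ≤ Δ/(2Bs) - (k̃²+2)ε/s for every i ∈ S₁, (2) |θ_i - μ̂_i| ≤ c_i for every i ∈ S₂, (3) Σ_{i∈S} |μ̂_i - μ_i| ≤ ε, and (4) Σ_{i∈S} |θ_i - μ_i| > Δ/B - (k̃²+1)ε. Then Δ ≤ 2B Σ_{i∈S₂} c_i. -/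
/-! By the triangle inequality through `μhat`, `∑ i ∈ S, |θ i - μ i|` is at most the `S₁` part
(`#S` shares of `Δ / (2B) - (k² + 2)ε`), plus the `S₂` part (at most `∑ c`), plus `ε`.
Comparing with (4) leaves `Δ / (2B) < ∑ i ∈ S₂, c i`. -/

open Finset

namespace Finset

variable {ι : Type*}

theorem sum_abs_sub_le_add_sum_abs_sub {α : Type*} [AddCommGroup α] [LinearOrder α]
    [IsOrderedAddMonoid α] (s : Finset ι) (f g h : ι → α) :
    ∑ i ∈ s, |f i - h i| ≤ ∑ i ∈ s, |f i - g i| + ∑ i ∈ s, |g i - h i| := by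
  rw [← sum_add_distrib]
  exact sum_le_sum fun i _ ↦ abs_sub_le (f i) (g i) (h i)

theorem sum_le_of_le_div_card {s t : Finset ι} (hst : s ⊆ t) (ht : t.Nonempty)
    {a : ℝ} (ha : 0 ≤ a) {f : ι → ℝ} (hf : ∀ i ∈ s, f i ≤ a / #t) :
    ∑ i ∈ s, f i ≤ a := by
  have hcard : (0 : ℝ) < #t := by exact_mod_cast ht.card_pos
  calc ∑ i ∈ s, f i ≤ #s • (a / #t) := sum_le_card_nsmul s f _ hf
    _ ≤ #t * (a / #t) := by rw [nsmul_eq_mul]; gcongr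
    _ = a := mul_div_cancel₀ a hcard.ne'

end Finset

theorem gap_charging_inequality_general
    {ι : Type*} [DecidableEq ι] (S S₁ S₂ : Finset ι) (hS : S.Nonempty)
    (hdisj : Disjoint S₁ S₂) (hunion : S = S₁ ∪ S₂)
    (B Δ : ℝ) (hB : 0 < B)
    (k : ℕ) (ε : ℝ)
    (hgap : 2 * B * ((k : ℝ) ^ 2 + 2) * ε < Δ)
    (θ μhat μ : ι → ℝ) (c : ι → ℝ)
    (h1 : ∀ i ∈ S₁,
      |θ i - μhat i| ≤ Δ / (2 * B * S.card) - ((k : ℝ) ^ 2 + 2) * ε / S.card)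
    (h2 : ∀ i ∈ S₂, |θ i - μhat i| ≤ c i)
    (h3 : ∑ i ∈ S, |μhat i - μ i| ≤ ε)
    (h4 : Δ / B - ((k : ℝ) ^ 2 + 1) * ε < ∑ i ∈ S, |θ i - μ i|) :
    Δ ≤ 2 * B * ∑ i ∈ S₂, c i := by
  have h2B : 0 < 2 * B := by positivity
  have hbudget : 0 ≤ Δ / (2 * B) - ((k : ℝ) ^ 2 + 2) * ε := by
    rw [sub_nonneg, le_div_iff₀ h2B]
    linarith
  have hS₁ : ∑ i ∈ S₁, |θ i - μhat i| ≤ Δ / (2 * B) - ((k : ℝ) ^ 2 + 2) * ε :=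
    sum_le_of_le_div_card (hunion ▸ subset_union_left) hS hbudget fun i hi ↦ by
      rw [sub_div, div_div]
      exact h1 i hi
  have hS₂ : ∑ i ∈ S₂, |θ i - μhat i| ≤ ∑ i ∈ S₂, c i := sum_le_sum h2
  have hsplit : ∑ i ∈ S, |θ i - μhat i| =
      ∑ i ∈ S₁, |θ i - μhat i| + ∑ i ∈ S₂, |θ i - μhat i| := by
    rw [hunion, sum_union hdisj]
  have htri := sum_abs_sub_le_add_sum_abs_sub S θ μhat μ
  have hhalf : Δ / (2 * B) < ∑ i ∈ S₂, c i := by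
    have hdouble : Δ / B = 2 * (Δ / (2 * B)) := by field_simp
    linarith
  exact ((div_lt_iff₀' h2B).1 hhalf).le

/-- Deterministic charging inequality: if the triggering set `S` is partitioned
into well-explored arms `S₁` and under-explored arms `S₂`, and the sampled
vector is far from the true means in ℓ₁ norm, then the gap `Δ` is charged to
the confidence radii of the under-explored arms. -/
theorem gap_charging_inequality
    {ι : Type*} [DecidableEq ι] (S S₁ S₂ : Finset ι) (hS : S.Nonempty)
    (hdisj : Disjoint S₁ S₂) (hunion : S = S₁ ∪ S₂)
    (B Δ : ℝ) (hB : 0 < B) (hΔ : 0 < Δ)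
    (k : ℕ) (hk : 1 ≤ k) (ε : ℝ) (hε : 0 < ε)
    (hgap : 2 * B * ((k : ℝ) ^ 2 + 2) * ε < Δ)
    (θ μhat μ : ι → ℝ) (c : ι → ℝ) (hc : ∀ i ∈ S₂, 0 ≤ c i)
    (h1 : ∀ i ∈ S₁,
      |θ i - μhat i| ≤ Δ / (2 * B * S.card) - ((k : ℝ) ^ 2 + 2) * ε / S.card)
    (h2 : ∀ i ∈ S₂, |θ i - μhat i| ≤ c i)
    (h3 : ∑ i ∈ S, |μhat i - μ i| ≤ ε)
    (h4 : Δ / B - ((k : ℝ) ^ 2 + 1) * ε < ∑ i ∈ S, |θ i - μ i|) :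
    Δ ≤ 2 * B * ∑ i ∈ S₂, c i :=
  gap_charging_inequality_general S S₁ S₂ hS hdisj hunion B Δ hB k ε hgap θ μhat μ c h1 h2 h3 h4
end
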